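/- For every k ∈ {1,…,n−2} there exists ε₀ ∈ (0,1) such that for every ε ∈ (0,ε₀) there exists δ₀ ∈ (0,1) such that for all δ ∈ (δ₀,1): V_k(ε,δ) > W_n(ε,δ), and V_k(ε,δ) > W_{k'}(ε,δ) for every k' ∈ {k+1,…,n−1}. That is, when the probability of repetition is sufficiently close to 1 and the mistake probability is positive but sufficiently small, the tolerant conditional cooperative strategy T_k strictly beats a single defector mutant and every single less tolerant conditional cooperator mutant. -/

import Mathlib

open Finset

/-- `ψ(j,q,ε) = (j choose q)·ε^q·(1−ε)^(j−q)`. -/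
noncomputable def psi (j q : ℕ) (ε : ℝ) : ℝ :=
  (j.choose q : ℝ) * ε ^ q * (1 - ε) ^ (j - q)

/-- One-shot expected payoff of cooperation against `n−1` error-prone cooperators. -/
noncomputable def FC (n : ℕ) (b c ε : ℝ) : ℝ :=
  (1 - ε) * ∑ q ∈ range n, psi (n - 1) q ε * (b * ((n : ℝ) - q) / n - c) +
    ε * ∑ q ∈ range n, psi (n - 1) q ε * (b * ((n : ℝ) - 1 - q) / n)

/-- One-shot expected payoff of defection against `n−1` error-prone cooperators. -/
noncomputable def FD (n : ℕ) (b ε : ℝ) : ℝ :=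
  ∑ q ∈ range n, psi (n - 1) q ε * (b * ((n : ℝ) - 1 - q) / n)

/-- Repeated-game payoff of the incumbent `T_k` strategy in a `T_k` population. -/
noncomputable def Vk (n k : ℕ) (b c ε δ : ℝ) : ℝ :=
  FC n b c ε /
    (1 - δ * ∑ q ∈ range (n - k - 1), psi (n - 1) q ε -
      δ * (1 - ε) * psi (n - 1) (n - k - 1) ε)

/-- Repeated-game payoff of a single defector (`T_n`) mutant in a `T_k` population. -/
noncomputable def Wn (n k : ℕ) (b ε δ : ℝ) : ℝ :=
  FD n b ε / (1 - δ * ∑ q ∈ range (n - k - 1), psi (n - 1) q ε)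

/-- Repeated-game payoff of a single less tolerant `T_{k'}` mutant (`k < k' ≤ n−1`)
in a `T_k` population. -/
noncomputable def Wk' (n k k' : ℕ) (b c ε δ : ℝ) : ℝ :=
  (FC n b c ε +
      δ * (∑ q ∈ Icc (n - k') (n - k - 2), psi (n - 1) q ε) * Wn n k b ε δ) /
    (1 - δ * ∑ q ∈ range (n - k'), psi (n - 1) q ε)

/-!
Write `Q = ψ(n−1, n−k−1, ε)` and `T` for the probability that more than `n−k−1` of the `n−1`
co-players err. Since `P + Q + T = 1` for the probability `P` of fewer errors, the denominator of
`V_k` is `d = 1 − δ + δ(εQ + T)`, that of `W_n` is `d + δ(1−ε)Q`, and `F_D = F_C + (1−ε)(c − b/n)`.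
Hence `W_n < V_k` reduces to `(c − b/n)·d < F_C·δ·Q`. As `ε → 0`, `T/Q → 0` and `F_C → b − c > 0`,
so `(c − b/n)(εQ + T) < F_C·Q` for small `ε`; this is the case `δ = 1`, and it persists for `δ`
near `1` by continuity. Finally `W_{k'}` is a mediant of `F_C/(d + δ(1−ε)Q) < V_k` and `W_n`.
-/

open Filter Topology

lemma add_div_add_lt {x y z w v : ℝ} (hy : 0 < y) (hw : 0 ≤ w) (hx : x < v * y)
    (hz : z ≤ v * w) : (x + z) / (y + w) < v := by
  rw [div_lt_iff₀ (by linarith)]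
  linarith

section Extraction

variable {α : Type*} [LinearOrder α] [TopologicalSpace α] [OrderTopology α] [DenselyOrdered α]
  {a b : α} {p : α → Prop}

lemma exists_forall_Ioo_of_eventually_nhdsGT (hab : a < b) (h : ∀ᶠ x in 𝓝[>] a, p x) :
    ∃ x₀, a < x₀ ∧ x₀ < b ∧ ∀ x, a < x → x < x₀ → p x := by
  obtain ⟨u, hu, hsub⟩ := (mem_nhdsGT_iff_exists_Ioo_subset' hab).1 (h.and (Ioo_mem_nhdsGT hab))
  obtain ⟨x₀, hax₀, hx₀u⟩ := _root_.exists_between hu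
  exact ⟨x₀, hax₀, (hsub ⟨hax₀, hx₀u⟩).2.2, fun x hx hxx₀ => (hsub ⟨hx, hxx₀.trans hx₀u⟩).1⟩

lemma exists_forall_Ioo_of_eventually_nhdsLT (hab : a < b) (h : ∀ᶠ x in 𝓝[<] b, p x) :
    ∃ x₀, a < x₀ ∧ x₀ < b ∧ ∀ x, x₀ < x → x < b → p x := by
  obtain ⟨l, hl, hsub⟩ := (mem_nhdsLT_iff_exists_Ioo_subset' hab).1 (h.and (Ioo_mem_nhdsLT hab))
  obtain ⟨x₀, hlx₀, hx₀b⟩ := _root_.exists_between hl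
  exact ⟨x₀, (hsub ⟨hlx₀, hx₀b⟩).2.1, hx₀b, fun x hx hxb => (hsub ⟨hlx₀.trans hx, hxb⟩).1⟩

end Extraction

lemma psi_nonneg {j q : ℕ} {ε : ℝ} (h0 : 0 ≤ ε) (h1 : ε ≤ 1) : 0 ≤ psi j q ε := by
  unfold psi
  have : 0 ≤ 1 - ε := by linarith
  positivity

lemma psi_pos {j q : ℕ} {ε : ℝ} (hq : q ≤ j) (h0 : 0 < ε) (h1 : ε < 1) : 0 < psi j q ε := by
  unfold psi
  have : 0 < 1 - ε := by linarith
  have : 0 < j.choose q := Nat.choose_pos hq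
  positivity

lemma sum_range_psi (j : ℕ) (ε : ℝ) : ∑ q ∈ range (j + 1), psi j q ε = 1 := by
  have h := add_pow ε (1 - ε) j
  rw [add_sub_cancel, one_pow] at h
  rw [h]
  exact sum_congr rfl fun q _ => by rw [psi]; ring

noncomputable def psiLt (j m : ℕ) (ε : ℝ) : ℝ := ∑ q ∈ range m, psi j q ε

noncomputable def psiGt (j m : ℕ) (ε : ℝ) : ℝ := ∑ q ∈ Ioc m j, psi j q ε

lemma psiLt_add_psi_add_psiGt {j m : ℕ} (hm : m ≤ j) (ε : ℝ) :
    psiLt j m ε + psi j m ε + psiGt j m ε = 1 := by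
  rw [psiLt, psiGt, ← sum_range_succ, ← Ico_add_one_add_one_eq_Ioc,
    sum_range_add_sum_Ico _ (by omega), sum_range_psi]

lemma psiLt_add_one {j m m' : ℕ} (h : m' ≤ m + 1) (ε : ℝ) :
    psiLt j (m + 1) ε = psiLt j m' ε + ∑ q ∈ Icc m' m, psi j q ε := by
  rw [psiLt, psiLt, ← sum_range_add_sum_Ico _ h, Ico_add_one_right_eq_Icc]

lemma psiGt_nonneg {j m : ℕ} {ε : ℝ} (h0 : 0 ≤ ε) (h1 : ε ≤ 1) : 0 ≤ psiGt j m ε :=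
  sum_nonneg fun _ _ => psi_nonneg h0 h1

lemma one_sub_mul_psiLt {j m : ℕ} (hm : m ≤ j) (ε δ : ℝ) :
    1 - δ * psiLt j m ε =
      1 - δ + δ * (ε * psi j m ε + psiGt j m ε) + δ * (1 - ε) * psi j m ε := by
  linear_combination -δ * psiLt_add_psi_add_psiGt hm ε

lemma one_sub_add_mul_psi_add_psiGt_pos {j m : ℕ} {ε δ : ℝ} (hε0 : 0 ≤ ε) (hε1 : ε ≤ 1)
    (hδ0 : 0 ≤ δ) (hδ1 : δ < 1) : 0 < 1 - δ + δ * (ε * psi j m ε + psiGt j m ε) := by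
  have := psi_nonneg (j := j) (q := m) hε0 hε1
  have := psiGt_nonneg (j := j) (m := m) hε0 hε1
  have : 0 ≤ δ * (ε * psi j m ε + psiGt j m ε) := by positivity
  linarith

lemma tendsto_psi_div_psi {j m q : ℕ} (hm : m ≤ j) (hmq : m < q) :
    Tendsto (fun ε => psi j q ε / psi j m ε) (𝓝[>] 0) (𝓝 0) := by
  have hC : (j.choose m : ℝ) ≠ 0 := by exact_mod_cast (Nat.choose_pos hm).ne'
  -- for `ε > 0` the ratio is `ε ^ (q - m)` times a function continuous at `0`
  set r : ℝ → ℝ := fun ε =>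
    ε ^ (q - m) * ((j.choose q : ℝ) * (1 - ε) ^ (j - q) / ((j.choose m : ℝ) * (1 - ε) ^ (j - m)))
  have hr : ContinuousAt r 0 := by fun_prop (disch := simp [hC])
  have hr0 : r 0 = 0 := by simp [r, zero_pow (Nat.sub_ne_zero_of_lt hmq)]
  refine (hr0 ▸ hr.tendsto.mono_left nhdsWithin_le_nhds).congr' ?_
  filter_upwards [Ioo_mem_nhdsGT zero_lt_one] with ε ⟨h0, h1⟩
  have : 1 - ε ≠ 0 := by linarith
  simp only [r, psi]
  rw [show ε ^ q = ε ^ (q - m) * ε ^ m by rw [← pow_add, Nat.sub_add_cancel hmq.le]]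
  field_simp

lemma tendsto_psiGt_div_psi {j m : ℕ} (hm : m ≤ j) :
    Tendsto (fun ε => psiGt j m ε / psi j m ε) (𝓝[>] 0) (𝓝 0) := by
  simp_rw [psiGt, sum_div]
  simpa using tendsto_finsetSum _ fun q hq => tendsto_psi_div_psi hm (mem_Ioc.1 hq).1

lemma FC_eq_FD_sub {n : ℕ} (hn : n ≠ 0) (b c ε : ℝ) :
    FC n b c ε = FD n b ε - (1 - ε) * (c - b / n) := by
  have hsum : ∑ q ∈ range n, psi (n - 1) q ε = 1 := by
    simpa [Nat.sub_add_cancel (Nat.one_le_iff_ne_zero.2 hn)] using sum_range_psi (n - 1) ε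
  have hsplit : ∑ q ∈ range n, psi (n - 1) q ε * (b * ((n : ℝ) - q) / n - c) =
      FD n b ε - (c - b / n) * ∑ q ∈ range n, psi (n - 1) q ε := by
    rw [FD, mul_sum, ← sum_sub_distrib]
    exact sum_congr rfl fun q _ => by ring
  rw [FC, hsplit, hsum, ← FD]
  ring

lemma continuous_FC (n : ℕ) (b c : ℝ) : Continuous (FC n b c) := by
  unfold FC psi
  fun_prop

lemma FC_zero {n : ℕ} (hn : n ≠ 0) (b c : ℝ) : FC n b c 0 = b - c := by
  have : (n : ℝ) ≠ 0 := Nat.cast_ne_zero.2 hn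
  rw [FC, sum_eq_single 0 (fun q _ hq => by simp [psi, hq]) (by simp [Nat.pos_of_ne_zero hn])]
  simp [psi, this]

lemma eventually_mul_lt_FC_mul_psi {n : ℕ} (hn : n ≠ 0) {b c : ℝ} (hcb : c < b) (γ : ℝ) {m : ℕ}
    (hm : m ≤ n - 1) :
    ∀ᶠ ε in 𝓝[>] 0,
      γ * (ε * psi (n - 1) m ε + psiGt (n - 1) m ε) < FC n b c ε * psi (n - 1) m ε := by
  have hlim : Tendsto (fun ε => γ * (ε + psiGt (n - 1) m ε / psi (n - 1) m ε)) (𝓝[>] 0) (𝓝 0) := by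
    simpa using ((tendsto_nhdsWithin_of_tendsto_nhds tendsto_id).add
      (tendsto_psiGt_div_psi hm)).const_mul γ
  have hFC : Tendsto (FC n b c) (𝓝[>] 0) (𝓝 (b - c)) :=
    FC_zero hn b c ▸ (continuous_FC n b c).continuousAt.tendsto.mono_left nhdsWithin_le_nhds
  filter_upwards [hlim.eventually_lt hFC (sub_pos.2 hcb), Ioo_mem_nhdsGT zero_lt_one]
    with ε hε ⟨hε0, hε1⟩
  have hQ := psi_pos hm hε0 hε1
  calc γ * (ε * psi (n - 1) m ε + psiGt (n - 1) m ε)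
      = γ * (ε + psiGt (n - 1) m ε / psi (n - 1) m ε) * psi (n - 1) m ε := by field_simp
    _ < FC n b c ε * psi (n - 1) m ε := mul_lt_mul_of_pos_right hε hQ

lemma Vk_eq (n k : ℕ) (b c ε δ : ℝ) :
    Vk n k b c ε δ = FC n b c ε /
      (1 - δ + δ * (ε * psi (n - 1) (n - k - 1) ε + psiGt (n - 1) (n - k - 1) ε)) := by
  rw [← add_sub_cancel_right (1 - δ + _) (δ * (1 - ε) * psi (n - 1) (n - k - 1) ε),
    ← one_sub_mul_psiLt (by omega)]
  rfl

lemma Wn_eq (n k : ℕ) (b ε δ : ℝ) :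
    Wn n k b ε δ = FD n b ε / (1 - δ * psiLt (n - 1) (n - k - 1) ε) := rfl

lemma Wn_lt_Vk_of {n k : ℕ} (hn : n ≠ 0) {b c ε δ : ℝ} (hε0 : 0 ≤ ε) (hε1 : ε < 1)
    (hδ0 : 0 ≤ δ) (hδ1 : δ < 1)
    (h : (c - b / n) * (1 - δ + δ * (ε * psi (n - 1) (n - k - 1) ε + psiGt (n - 1) (n - k - 1) ε))
      < FC n b c ε * δ * psi (n - 1) (n - k - 1) ε) :
    Wn n k b ε δ < Vk n k b c ε δ := by
  have hd := one_sub_add_mul_psi_add_psiGt_pos (j := n - 1) (m := n - k - 1) hε0 hε1.le hδ0 hδ1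
  have hQ := psi_nonneg (j := n - 1) (q := n - k - 1) hε0 hε1.le
  have hFD : FD n b ε = FC n b c ε + (1 - ε) * (c - b / n) := by
    rw [FC_eq_FD_sub hn]
    ring
  rw [Wn_eq, one_sub_mul_psiLt (by omega), Vk_eq, div_lt_div_iff₀ (by positivity) hd, hFD]
  linarith [mul_lt_mul_of_pos_left h (sub_pos.2 hε1)]

lemma Wk'_lt_Vk {n k k' : ℕ} (hk' : k + 1 ≤ k') (hk'n : k' ≤ n - 1) {b c ε δ : ℝ}
    (hε0 : 0 < ε) (hε1 : ε < 1) (hδ0 : 0 < δ) (hδ1 : δ < 1) (hFC : 0 < FC n b c ε)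
    (hWn : Wn n k b ε δ < Vk n k b c ε δ) :
    Wk' n k k' b c ε δ < Vk n k b c ε δ := by
  set R := ∑ q ∈ Icc (n - k') (n - k - 2), psi (n - 1) q ε
  have hR : 0 ≤ δ * R := mul_nonneg hδ0.le (sum_nonneg fun _ _ => psi_nonneg hε0.le hε1.le)
  have hsplit : psiLt (n - 1) (n - k - 1) ε = psiLt (n - 1) (n - k') ε + R := by
    have := psiLt_add_one (j := n - 1) (m := n - k - 2) (m' := n - k') (by omega) ε
    rwa [show n - k - 2 + 1 = n - k - 1 by omega] at this
  have hd :=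
    one_sub_add_mul_psi_add_psiGt_pos (j := n - 1) (m := n - k - 1) hε0.le hε1.le hδ0.le hδ1
  have hQ := psi_pos (j := n - 1) (q := n - k - 1) (by omega) hε0 hε1
  have he := one_sub_mul_psiLt (j := n - 1) (m := n - k - 1) (by omega) ε δ
  have hgap : 0 < δ * (1 - ε) * psi (n - 1) (n - k - 1) ε := by
    have := sub_pos.2 hε1
    positivity
  have hVk : FC n b c ε < Vk n k b c ε δ * (1 - δ * psiLt (n - 1) (n - k - 1) ε) := by
    rw [Vk_eq, div_mul_eq_mul_div, lt_div_iff₀ hd, he]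
    nlinarith
  have hden : 1 - δ * psiLt (n - 1) (n - k') ε = 1 - δ * psiLt (n - 1) (n - k - 1) ε + δ * R := by
    rw [hsplit]
    ring
  calc Wk' n k k' b c ε δ
      = (FC n b c ε + δ * R * Wn n k b ε δ) / (1 - δ * psiLt (n - 1) (n - k') ε) := rfl
    _ < Vk n k b c ε δ := hden ▸ add_div_add_lt (by linarith) hR hVk
        (by rw [mul_comm (Vk _ _ _ _ _ _)]; exact mul_le_mul_of_nonneg_left hWn.le hR)

lemma eventually_Wn_lt_Vk_and_Wk'_lt_Vk {n k : ℕ} (hn : n ≠ 0) {b c ε : ℝ} (hbc : b / n < c)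
    (hε0 : 0 < ε) (hε1 : ε < 1)
    (hmargin : (c - b / n) * (ε * psi (n - 1) (n - k - 1) ε + psiGt (n - 1) (n - k - 1) ε)
      < FC n b c ε * psi (n - 1) (n - k - 1) ε) :
    ∀ᶠ δ in 𝓝[<] 1, Wn n k b ε δ < Vk n k b c ε δ ∧
      ∀ k', k + 1 ≤ k' → k' ≤ n - 1 → Wk' n k k' b c ε δ < Vk n k b c ε δ := by
  have hFC : 0 < FC n b c ε := by
    have := psiGt_nonneg (j := n - 1) (m := n - k - 1) hε0.le hε1.le
    have := psi_pos (j := n - 1) (q := n - k - 1) (by omega) hε0 hε1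
    have : 0 < FC n b c ε * psi (n - 1) (n - k - 1) ε :=
      (mul_nonneg (sub_nonneg.2 hbc.le) (by positivity)).trans_lt hmargin
    exact pos_of_mul_pos_left this (by positivity)
  have hnear : ∀ᶠ δ in 𝓝 1,
      (c - b / n) * (1 - δ + δ * (ε * psi (n - 1) (n - k - 1) ε + psiGt (n - 1) (n - k - 1) ε))
        < FC n b c ε * δ * psi (n - 1) (n - k - 1) ε :=
    ContinuousAt.eventually_lt (by fun_prop) (by fun_prop) (by simpa using hmargin)
  filter_upwards [nhdsWithin_le_nhds hnear, Ioo_mem_nhdsLT zero_lt_one] with δ hδ ⟨hδ0, hδ1⟩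
  have hWn := Wn_lt_Vk_of hn hε0.le hε1 hδ0.le hδ1 hδ
  exact ⟨hWn, fun k' hk' hk'n => Wk'_lt_Vk hk' hk'n hε0 hε1 hδ0 hδ1 hFC hWn⟩

theorem Tk_evolutionarily_stable_general (n : ℕ) (hn : 3 ≤ n) (b c : ℝ)
    (hbc : b / n < c) (hcb : c < b)
    (k : ℕ) :
    ∃ ε₀ : ℝ, 0 < ε₀ ∧ ε₀ < 1 ∧
      ∀ ε : ℝ, 0 < ε → ε < ε₀ →
        ∃ δ₀ : ℝ, 0 < δ₀ ∧ δ₀ < 1 ∧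
          ∀ δ : ℝ, δ₀ < δ → δ < 1 →
            Vk n k b c ε δ > Wn n k b ε δ ∧
            ∀ k' : ℕ, k + 1 ≤ k' → k' ≤ n - 1 →
              Vk n k b c ε δ > Wk' n k k' b c ε δ := by
  have hn0 : n ≠ 0 := by omega
  obtain ⟨ε₀, hε₀, hε₀1, hmargin⟩ := exists_forall_Ioo_of_eventually_nhdsGT zero_lt_one
    (eventually_mul_lt_FC_mul_psi hn0 hcb (c - b / n) (m := n - k - 1) (by omega))
  refine ⟨ε₀, hε₀, hε₀1, fun ε hε hεε₀ => ?_⟩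
  exact exists_forall_Ioo_of_eventually_nhdsLT zero_lt_one
    (eventually_Wn_lt_Vk_and_Wk'_lt_Vk hn0 hbc hε (hεε₀.trans hε₀1) (hmargin ε hε hεε₀))

/-- For every `k ∈ {1,…,n−2}` there exists `ε₀ ∈ (0,1)` such that for every
`ε ∈ (0,ε₀)` there exists `δ₀ ∈ (0,1)` such that for all `δ ∈ (δ₀,1)` the
tolerant conditional cooperative strategy `T_k` strictly beats a single defector
mutant and every single less tolerant conditional cooperator mutant `T_{k'}`,
`k' ∈ {k+1,…,n−1}`. -/
theorem Tk_evolutionarily_stable (n : ℕ) (hn : 3 ≤ n) (b c : ℝ)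
    (hb0 : 0 < b / n) (hbc : b / n < c) (hcb : c < b)
    (k : ℕ) (hk1 : 1 ≤ k) (hk2 : k ≤ n - 2) :
    ∃ ε₀ : ℝ, 0 < ε₀ ∧ ε₀ < 1 ∧
      ∀ ε : ℝ, 0 < ε → ε < ε₀ →
        ∃ δ₀ : ℝ, 0 < δ₀ ∧ δ₀ < 1 ∧
          ∀ δ : ℝ, δ₀ < δ → δ < 1 →
            Vk n k b c ε δ > Wn n k b ε δ ∧
            ∀ k' : ℕ, k + 1 ≤ k' → k' ≤ n - 1 →
              Vk n k b c ε δ > Wk' n k k' b c ε δ :=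
  Tk_evolutionarily_stable_general n hn b c hbc hcb k
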